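/- Fix an integer p ≥ 2. There exists a polynomial P ∈ ℝ[X] of degree at most 2p−2 such that: (a) P(t) = Pr_p(t) · (S_p(t) + S̃_p(t)) / (2p−1)! for every real t ∉ {2p−1, …, 3p−2} ∪ {−p, …, −1}; (b) P(i) = C(i, 2p−1) for every integer i with 2p−1 ≤ i ≤ 3p−2, where C(i, 2p−1) is the usual binomial coefficient; and (c) P(2p−2−t) = P(t) for all real t. -/

import Mathlib

/-- `c_i = (−1)^{p−i} (i!)² / ( ((i−2p+1)!)² (p+i)! (3p−i−2)! )`. -/
noncomputable def cc (p i : ℕ) : ℝ :=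
  (-1 : ℝ) ^ ((p : ℤ) - (i : ℤ)) * (Nat.factorial i : ℝ)^2 /
    ((Nat.factorial (i + 1 - 2*p) : ℝ)^2 * (Nat.factorial (p + i) : ℝ) *
      (Nat.factorial (3*p - 2 - i) : ℝ))

/-- `S_p(t) = Σ_{i=2p−1}^{3p−2} c_i/(t−i)`. -/
noncomputable def Sp (p : ℕ) (t : ℝ) : ℝ :=
  ∑ i ∈ Finset.Icc (2*p - 1) (3*p - 2), cc p i / (t - i)

/-- `S̃_p(t) = −Σ_{i=2p−1}^{3p−2} c_i/(t+i−2p+2)`. -/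
noncomputable def Sp' (p : ℕ) (t : ℝ) : ℝ :=
  - ∑ i ∈ Finset.Icc (2*p - 1) (3*p - 2), cc p i / (t + i - 2*p + 2)

/-- `A_p(t) = S_p(t) + S̃_p(t)`. -/
noncomputable def Ap (p : ℕ) (t : ℝ) : ℝ := Sp p t + Sp' p t

/-- `t` lies in the excluded set `{2p−1, …, 3p−2} ∪ {−p, …, −1}`. -/
def excluded (p : ℕ) (t : ℝ) : Prop :=
  ∃ k : ℤ, ((2*(p : ℤ) - 1 ≤ k ∧ k ≤ 3*(p : ℤ) - 2) ∨ (-(p : ℤ) ≤ k ∧ k ≤ -1)) ∧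
    t = (k : ℝ)

/-- `Pr_p(t) = Π_{i=2p−1}^{3p−2} (t−i)(t+i−2p+2)`. -/
noncomputable def Prp (p : ℕ) (t : ℝ) : ℝ :=
  ∏ i ∈ Finset.Icc (2*p - 1) (3*p - 2), (t - i) * (t + i - 2*p + 2)

open Finset Polynomial

lemma H2 (c n : ℕ) :
    (Nat.factorial c : ℝ) * ∏ k ∈ Finset.range n, ((c:ℝ)+1+k) = (Nat.factorial (c+n) : ℝ) := by
  induction n with
  | zero => simp
  | succ n ih =>
    rw [Finset.prod_range_succ, ← mul_assoc, ih,
      show c + (n+1) = (c+n) + 1 from rfl, Nat.factorial_succ]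
    push_cast; ring

lemma H2' (n : ℕ) : ∏ k ∈ Finset.range n, (1+(k:ℝ)) = (Nat.factorial n : ℝ) := by
  simpa using H2 0 n

lemma H1 (n : ℕ) : ∏ k ∈ Finset.range n, ((n:ℝ) - k) = (Nat.factorial n : ℝ) := by
  rw [← Finset.prod_range_reflect (fun k => (n:ℝ) - k) n, ← H2' n]
  apply Finset.prod_congr rfl
  intro k hk
  rw [Finset.mem_range] at hk
  have h1 : ((n - 1 - k : ℕ) : ℝ) = (n:ℝ) - 1 - k := by
    rw [Nat.cast_sub (by omega), Nat.cast_sub (by omega)]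
    push_cast; ring
  simp only [h1]; ring

lemma IccRange (a b : ℕ) (f : ℕ → ℝ) :
    ∏ j ∈ Finset.Icc a b, f j = ∏ k ∈ Finset.range (b+1-a), f (a+k) := by
  rw [← Finset.Ico_add_one_right_eq_Icc, Finset.prod_Ico_eq_prod_range]

/-- `R_i = ∏_{j ∈ Icc \ {i}} (X - j)(X - (2p-2-j))`. -/
noncomputable def Rp (p i : ℕ) : Polynomial ℝ :=
  ∏ j ∈ (Finset.Icc (2*p-1) (3*p-2)).erase i,
    (X - C (j:ℝ)) * (X - C (2*(p:ℝ) - 2 - j))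

lemma Rp_eval (p i : ℕ) (t : ℝ) :
    (Rp p i).eval t =
      ∏ j ∈ (Finset.Icc (2*p-1) (3*p-2)).erase i, ((t - j) * (t + j - 2*p + 2)) := by
  simp only [Rp, eval_prod, eval_mul, eval_sub, eval_X, eval_C]
  exact Finset.prod_congr rfl (fun j _ => by ring)

noncomputable def PP (p : ℕ) : Polynomial ℝ :=
  C ((Nat.factorial (2*p-1) : ℝ))⁻¹ *
    ∑ i ∈ Finset.Icc (2*p-1) (3*p-2), C (cc p i * (2*(i:ℝ) - 2*p + 2)) * Rp p i

lemma PP_eval (p : ℕ) (t : ℝ) :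
    (PP p).eval t = ((Nat.factorial (2*p-1) : ℝ))⁻¹ *
      ∑ i ∈ Finset.Icc (2*p-1) (3*p-2),
        cc p i * (2*(i:ℝ) - 2*p + 2) * (Rp p i).eval t := by
  rw [PP, eval_mul, eval_C, eval_finset_sum]
  congr 1
  exact Finset.sum_congr rfl (fun i _ => by rw [eval_mul, eval_C])

theorem stmt_16 (p : ℕ) (hp : 2 ≤ p) :
    ∃ P : Polynomial ℝ, P.natDegree ≤ 2*p - 2 ∧
      (∀ t : ℝ, ¬ excluded p t →
        P.eval t = Prp p t * (Sp p t + Sp' p t) / (Nat.factorial (2*p - 1) : ℝ)) ∧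
      (∀ i : ℕ, 2*p - 1 ≤ i → i ≤ 3*p - 2 →
        P.eval (i : ℝ) = (Nat.choose i (2*p - 1) : ℝ)) ∧
      (∀ t : ℝ, P.eval (2*(p : ℝ) - 2 - t) = P.eval t) := by
  have hc2p : ((2*p - 1 : ℕ) : ℝ) = 2*(p:ℝ) - 1 := by
    rw [Nat.cast_sub (by omega)]; push_cast; ring
  refine ⟨PP p, ?_, ?_, ?_, ?_⟩
  · -- degree
    refine (natDegree_mul_le).trans ?_
    simp only [natDegree_C, zero_add]
    refine (natDegree_sum_le_of_forall_le _ _ ?_)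
    intro i hi
    refine (natDegree_mul_le).trans ?_
    simp only [natDegree_C, zero_add]
    refine (natDegree_prod_le _ _).trans ?_
    have hcard : ((Finset.Icc (2*p-1) (3*p-2)).erase i).card = p - 1 := by
      rw [Finset.card_erase_of_mem hi, Nat.card_Icc]; omega
    calc ∑ j ∈ (Finset.Icc (2*p-1) (3*p-2)).erase i,
          ((X - C (j:ℝ)) * (X - C (2*(p:ℝ) - 2 - j))).natDegree
        ≤ ∑ _j ∈ (Finset.Icc (2*p-1) (3*p-2)).erase i, 2 := by
          refine Finset.sum_le_sum fun j _ => ?_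
          refine (natDegree_mul_le).trans ?_
          rw [natDegree_X_sub_C, natDegree_X_sub_C]
      _ ≤ 2*p - 2 := by rw [Finset.sum_const, hcard, smul_eq_mul]; omega
  · -- (a)
    intro t ht
    have hne : ∀ i ∈ Finset.Icc (2*p-1) (3*p-2), (t - i) ≠ 0 ∧ (t + i - 2*p + 2) ≠ 0 := by
      intro i hi
      rw [Finset.mem_Icc] at hi
      constructor
      · intro h
        exact ht ⟨(i : ℤ), Or.inl ⟨by omega, by omega⟩, by push_cast; linarith⟩
      · intro h
        refine ht ⟨2*(p:ℤ) - 2 - i, Or.inr ⟨by omega, by omega⟩, ?_⟩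
        push_cast; linarith
    rw [PP_eval, Sp, Sp', ← sub_eq_add_neg, ← Finset.sum_sub_distrib]
    have hsum : ∑ i ∈ Finset.Icc (2*p-1) (3*p-2),
          cc p i * (2*(i:ℝ) - 2*p + 2) * (Rp p i).eval t
        = ∑ i ∈ Finset.Icc (2*p-1) (3*p-2),
            Prp p t * (cc p i / (t - i) - cc p i / (t + i - 2*p + 2)) := by
      apply Finset.sum_congr rfl
      intro i hi
      obtain ⟨h1, h2⟩ := hne i hi
      have hPr : Prp p t = (t - i) * (t + i - 2*p + 2) * (Rp p i).eval t := by
        rw [Rp_eval, Prp, ← Finset.mul_prod_erase _ _ hi]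
      rw [hPr]
      field_simp
      ring
    rw [hsum, ← Finset.mul_sum, inv_mul_eq_div]
  · -- (b)
    intro i hi1 hi2
    have hi : i ∈ Finset.Icc (2*p-1) (3*p-2) := Finset.mem_Icc.mpr ⟨hi1, hi2⟩
    rw [PP_eval]
    have hone : ∑ j ∈ Finset.Icc (2*p-1) (3*p-2),
          cc p j * (2*(j:ℝ) - 2*p + 2) * (Rp p j).eval (i:ℝ)
        = cc p i * (2*(i:ℝ) - 2*p + 2) * (Rp p i).eval (i:ℝ) := by
      apply Finset.sum_eq_single_of_mem i hi
      intro j hj hji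
      have hz : (Rp p j).eval (i:ℝ) = 0 := by
        rw [Rp_eval]
        exact Finset.prod_eq_zero (i := i) (Finset.mem_erase.mpr ⟨Ne.symm hji, hi⟩) (by simp)
      rw [hz, mul_zero]
    rw [hone]
    obtain ⟨a, ha⟩ : ∃ a, i = 2*p - 1 + a := ⟨i - (2*p-1), by omega⟩
    obtain ⟨b, hb⟩ : ∃ b, 3*p - 2 = i + b := ⟨3*p - 2 - i, by omega⟩
    have hia : (i:ℝ) = 2*(p:ℝ) - 1 + a := by
      rw [ha]; push_cast [hc2p]; ring
    have hne0 : ∀ m : ℕ, (Nat.factorial m : ℝ) ≠ 0 :=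
      fun m => Nat.cast_ne_zero.mpr (Nat.factorial_ne_zero m)
    -- split the erase product
    have hsplit : (Finset.Icc (2*p-1) (3*p-2)).erase i
        = Finset.Icc (2*p-1) (i-1) ∪ Finset.Icc (i+1) (3*p-2) := by
      ext j
      simp only [Finset.mem_erase, Finset.mem_Icc, Finset.mem_union]
      omega
    have hdisj : Disjoint (Finset.Icc (2*p-1) (i-1)) (Finset.Icc (i+1) (3*p-2)) := by
      rw [Finset.disjoint_left]
      intro j hj hj'
      simp only [Finset.mem_Icc] at hj hj'
      omega
    have hT1a : ∏ j ∈ Finset.Icc (2*p-1) (i-1), ((i:ℝ) - j) = (Nat.factorial a : ℝ) := by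
      rw [IccRange, show i - 1 + 1 - (2*p-1) = a by omega, ← H1 a]
      apply Finset.prod_congr rfl
      intro k hk
      push_cast [hc2p]
      rw [hia]; ring
    have hT1b : ∏ j ∈ Finset.Icc (i+1) (3*p-2), ((i:ℝ) - j)
        = (-1:ℝ)^b * (Nat.factorial b : ℝ) := by
      rw [IccRange, show 3*p - 2 + 1 - (i+1) = b by omega, ← H2' b,
        show ((-1:ℝ))^b = ∏ _k ∈ Finset.range b, (-1:ℝ) by simp, ← Finset.prod_mul_distrib]
      apply Finset.prod_congr rfl
      intro k hk
      push_cast; ring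
    have hprod1 : ∏ j ∈ (Finset.Icc (2*p-1) (3*p-2)).erase i, ((i:ℝ) - j)
        = (Nat.factorial a : ℝ) * ((-1:ℝ)^b * (Nat.factorial b : ℝ)) := by
      rw [hsplit, Finset.prod_union hdisj, hT1a, hT1b]
    have hT2 : ∏ j ∈ Finset.Icc (2*p-1) (3*p-2), ((i:ℝ) + j - 2*p + 2)
        = (Nat.factorial (i+p) : ℝ) / (Nat.factorial i : ℝ) := by
      rw [IccRange, show 3*p - 2 + 1 - (2*p-1) = p by omega, eq_div_iff (hne0 i), mul_comm,
        ← H2 i p]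
      congr 1
      apply Finset.prod_congr rfl
      intro k hk
      push_cast [hc2p]; ring
    have hT2' : (2*(i:ℝ) - 2*p + 2) * ∏ j ∈ (Finset.Icc (2*p-1) (3*p-2)).erase i,
          ((i:ℝ) + j - 2*p + 2) = (Nat.factorial (i+p) : ℝ) / (Nat.factorial i : ℝ) := by
      have h := Finset.mul_prod_erase (Finset.Icc (2*p-1) (3*p-2))
        (fun j => (i:ℝ) + j - 2*(p:ℝ) + 2) hi
      rw [← hT2, ← h]
      congr 1
      ring
    have h2i : (2*(i:ℝ) - 2*p + 2) ≠ 0 := by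
      have hp' : (2:ℝ) ≤ p := by exact_mod_cast hp
      have haa : (0:ℝ) ≤ a := Nat.cast_nonneg a
      rw [hia]
      intro h
      nlinarith
    have hP2v : ∏ j ∈ (Finset.Icc (2*p-1) (3*p-2)).erase i, ((i:ℝ) + j - 2*p + 2)
        = (Nat.factorial (i+p) : ℝ) / (Nat.factorial i : ℝ) / (2*(i:ℝ) - 2*p + 2) := by
      rw [eq_div_iff h2i, mul_comm]
      exact hT2'
    have hbz : (b:ℤ) = 3*(p:ℤ) - 2 - (i:ℤ) := by omega
    have hs2 : (-1:ℝ) ^ ((p:ℤ) - (i:ℤ)) = (-1:ℝ)^b := by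
      rw [← zpow_natCast (-1:ℝ) b, show (p:ℤ) - (i:ℤ) = (b:ℤ) + 2*(1 - (p:ℤ)) by omega,
        zpow_add₀ (by norm_num : (-1:ℝ) ≠ 0), zpow_mul]
      norm_num
    have hcc : cc p i = (-1:ℝ)^b * (Nat.factorial i : ℝ)^2 /
        ((Nat.factorial a : ℝ)^2 * (Nat.factorial (i+p) : ℝ) * (Nat.factorial b : ℝ)) := by
      rw [cc, hs2, show i + 1 - 2*p = a by omega, show p + i = i + p by omega,
        show 3*p - 2 - i = b by omega]
    have hch : (Nat.choose i (2*p-1) : ℝ)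
        = (Nat.factorial i : ℝ) / ((Nat.factorial (2*p-1) : ℝ) * (Nat.factorial a : ℝ)) := by
      rw [Nat.cast_choose ℝ hi1, show i - (2*p-1) = a by omega]
    rw [Rp_eval, Finset.prod_mul_distrib, hprod1, hP2v, hcc, hch]
    have hfa := hne0 a
    have hfb := hne0 b
    have hfi := hne0 i
    have hfip := hne0 (i+p)
    have hff := hne0 (2*p-1)
    have h2i' : (1 + (i:ℝ) - p) ≠ 0 := by intro h; apply h2i; linarith
    obtain hε | hε := neg_one_pow_eq_or ℝ b <;> rw [hε] <;> field_simp <;> ring <;> field_simp <;> ring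
  · -- (c)
    intro t
    rw [PP_eval, PP_eval]
    congr 1
    apply Finset.sum_congr rfl
    intro i hi
    congr 1
    rw [Rp_eval, Rp_eval]
    apply Finset.prod_congr rfl
    intro j hj
    ring
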